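/- No rounding rule for n = 4 parties satisfies the following strengthened monotonicity axiom: for all residue vectors p, p' ∈ [0,1)^4 summing to the same integer k and every k-element subset T of {1,2,3,4} such that p'_i ≥ p_i for all i ∈ T (with no condition on the residues of parties outside T), it holds that P[r(p') = T] ≥ P[r(p) = T]. -/

import Mathlib

open Finset

/-!
Applied in both directions, strengthened monotonicity at `k = 2` makes `r p T` depend only on the
residues of the two parties in `T`. With `p 0 = 3/4` fixed, `r p {0, j} = f_j (p j)` for some
functions `f_j`, and the marginal of party `0` reads `f₁ (p 1) + f₂ (p 2) + f₃ (p 3) = 3/4`.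
A vanishing residue reduces to three parties, where the pair probabilities are forced:
`r p {i, j} = (p i + p j - p m) / 2`. This pins `f₁ (1/2) = 1/4`, `f₁ (3/4) = 1/2` and
`f₂ (1/2) = f₃ (1/2) = 1/4`; the marginals at `(p 1, p 2, p 3) = (1/2, 1/4, 1/2)` and
`(1/2, 1/2, 1/4)` then give `f₂ (1/4) = f₃ (1/4) = 1/4`, so at `(3/4, 1/4, 1/4)` the marginal
of party `0` would be `1/2 + 1/4 + 1/4 ≠ 3/4`.
-/

/-- A rounding rule for `n` parties: for every residue vector `p ∈ [0,1)^n`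
summing to an integer `k`, `r p` is a probability distribution over subsets of
`{1,…,n}` supported on `k`-element subsets whose marginals are the `p i`. -/
def IsRoundingRule (n : ℕ) (r : (Fin n → ℝ) → Finset (Fin n) → ℝ) : Prop :=
  ∀ (p : Fin n → ℝ) (k : ℕ), (∀ i, 0 ≤ p i ∧ p i < 1) → (∑ i, p i = (k : ℝ)) →
    (∀ A : Finset (Fin n), 0 ≤ r p A) ∧
    (∑ A : Finset (Fin n), r p A = 1) ∧
    (∀ A : Finset (Fin n), r p A ≠ 0 → A.card = k) ∧
    (∀ i : Fin n,
      ∑ A ∈ (univ : Finset (Finset (Fin n))).filter (fun A => i ∈ A), r p A = p i)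

theorem sum_filter_mem_eq_sum_erase_pair {α M : Type*} [Fintype α] [DecidableEq α]
    [AddCommMonoid M] (μ : Finset α → M) (hμ : ∀ A, μ A ≠ 0 → A.card = 2) (i : α) :
    ∑ A ∈ univ.filter (fun A => i ∈ A), μ A = ∑ j ∈ univ.erase i, μ {i, j} := by
  have hinj : Set.InjOn (fun j => ({i, j} : Finset α)) (univ.erase i : Finset α) := by
    intro j hj j' hj' h
    have hj_mem : j ∈ ({i, j'} : Finset α) := by
      rw [← show ({i, j} : Finset α) = {i, j'} from h]; simp
    simp_all
  rw [← sum_image hinj]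
  refine (sum_subset ?_ ?_).symm
  · intro A hA
    obtain ⟨j, -, rfl⟩ := mem_image.mp hA
    simp
  · intro A hA hA'
    by_contra h
    obtain ⟨x, y, hxy, rfl⟩ := card_eq_two.mp (hμ A h)
    refine hA' (mem_image.mpr ?_)
    rcases mem_insert.mp (mem_filter.mp hA).2 with rfl | hy
    · exact ⟨y, by simp [hxy.symm], rfl⟩
    · rw [mem_singleton.mp hy]
      exact ⟨x, by simp [hxy], pair_comm _ _⟩

theorem univ_fin_four_erase_eq_of_nodup :
    ∀ {i j m l : Fin 4}, [i, j, m, l].Nodup → (univ : Finset (Fin 4)).erase i = {j, m, l} := by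
  decide

def IsResidueVector (n k : ℕ) (p : Fin n → ℝ) : Prop :=
  (∀ i, 0 ≤ p i ∧ p i < 1) ∧ ∑ i, p i = k

theorem isResidueVector_four {k : ℕ} {a b c d : ℝ}
    (h : (0 ≤ a ∧ a < 1) ∧ (0 ≤ b ∧ b < 1) ∧ (0 ≤ c ∧ c < 1) ∧ (0 ≤ d ∧ d < 1) ∧
      a + b + c + d = k) :
    IsResidueVector 4 k ![a, b, c, d] := by
  obtain ⟨ha, hb, hc, hd, hsum⟩ := h
  refine ⟨fun i => ?_, ?_⟩
  · fin_cases i <;> assumption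
  · simpa [Fin.sum_univ_four, add_assoc] using hsum

def IsLocalAt (n k : ℕ) (r : (Fin n → ℝ) → Finset (Fin n) → ℝ) : Prop :=
  ∀ p q, IsResidueVector n k p → IsResidueVector n k q →
    ∀ T : Finset (Fin n), T.card = k → (∀ i ∈ T, p i = q i) → r p T = r q T

theorem isLocalAt_of_monotone {n k : ℕ} {r : (Fin n → ℝ) → Finset (Fin n) → ℝ}
    (hmono : ∀ p p' : Fin n → ℝ, (∀ i, 0 ≤ p i ∧ p i < 1) → (∀ i, 0 ≤ p' i ∧ p' i < 1) →
      (∑ i, p i = (k : ℝ)) → (∑ i, p' i = (k : ℝ)) →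
      ∀ T : Finset (Fin n), T.card = k → (∀ i ∈ T, p i ≤ p' i) → r p T ≤ r p' T) :
    IsLocalAt n k r := fun p q hp hq T hT hpq =>
  le_antisymm (hmono p q hp.1 hq.1 hp.2 hq.2 T hT fun i hi => (hpq i hi).le)
    (hmono q p hq.1 hp.1 hq.2 hp.2 T hT fun i hi => (hpq i hi).ge)

namespace IsRoundingRule

section
variable {n k : ℕ} {r : (Fin n → ℝ) → Finset (Fin n) → ℝ} {p : Fin n → ℝ}

theorem eq_zero_of_mem_of_eq_zero (hr : IsRoundingRule n r) (hp : IsResidueVector n k p)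
    {l : Fin n} (hl : p l = 0) {A : Finset (Fin n)} (hA : l ∈ A) : r p A = 0 := by
  obtain ⟨hnonneg, -, -, hmarg⟩ := hr p k hp.1 hp.2
  have hmarg_l := hmarg l
  rw [hl, sum_eq_zero_iff_of_nonneg fun A _ => hnonneg A] at hmarg_l
  exact hmarg_l A (mem_filter.mpr ⟨mem_univ _, hA⟩)

theorem sum_erase_pair_eq (hr : IsRoundingRule n r) (hp : IsResidueVector n 2 p) (i : Fin n) :
    ∑ j ∈ univ.erase i, r p {i, j} = p i := by
  obtain ⟨-, -, hsupp, hmarg⟩ := hr p 2 hp.1 hp.2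
  rw [← sum_filter_mem_eq_sum_erase_pair _ hsupp, hmarg]

end

variable {r : (Fin 4 → ℝ) → Finset (Fin 4) → ℝ} {p : Fin 4 → ℝ}

theorem pair_add_pair_add_pair_eq (hr : IsRoundingRule 4 r) (hp : IsResidueVector 4 2 p)
    {i j m l : Fin 4} (h : [i, j, m, l].Nodup) :
    r p {i, j} + r p {i, m} + r p {i, l} = p i := by
  have hjml : j ∉ ({m, l} : Finset (Fin 4)) ∧ m ≠ l := by simp_all
  rw [← hr.sum_erase_pair_eq hp i, univ_fin_four_erase_eq_of_nodup h, sum_insert hjml.1,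
    sum_pair hjml.2, add_assoc]

theorem pair_eq_of_eq_zero (hr : IsRoundingRule 4 r) (hp : IsResidueVector 4 2 p)
    {i j m l : Fin 4} (h : [i, j, m, l].Nodup) (hl : p l = 0) :
    r p {i, j} = (p i + p j - p m) / 2 := by
  have hi := hr.pair_add_pair_add_pair_eq hp h
  have hj := hr.pair_add_pair_add_pair_eq hp (i := j) (j := i) (m := m) (l := l)
    (by simp at h ⊢; tauto)
  have hm := hr.pair_add_pair_add_pair_eq hp (i := m) (j := i) (m := j) (l := l)
    (by simp at h ⊢; tauto)
  rw [pair_comm j i] at hj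
  rw [pair_comm m i, pair_comm m j] at hm
  have hil := hr.eq_zero_of_mem_of_eq_zero hp hl (A := {i, l}) (by simp)
  have hjl := hr.eq_zero_of_mem_of_eq_zero hp hl (A := {j, l}) (by simp)
  have hml := hr.eq_zero_of_mem_of_eq_zero hp hl (A := {m, l}) (by simp)
  linarith

theorem not_isLocalAt_two (hr : IsRoundingRule 4 r) : ¬ IsLocalAt 4 2 r := by
  intro hloc
  set v₁ : Fin 4 → ℝ := ![3/4, 1/2, 1/4, 1/2] with hv₁
  set v₂ : Fin 4 → ℝ := ![3/4, 1/2, 1/2, 1/4] with hv₂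
  set v₃ : Fin 4 → ℝ := ![3/4, 1/2, 3/4, 0] with hv₃
  set v₄ : Fin 4 → ℝ := ![3/4, 3/4, 0, 1/2] with hv₄
  set v₅ : Fin 4 → ℝ := ![3/4, 3/4, 1/4, 1/4] with hv₅
  set v₆ : Fin 4 → ℝ := ![3/4, 3/4, 1/2, 0] with hv₆
  have h₁ : IsResidueVector 4 2 v₁ := isResidueVector_four (by norm_num)
  have h₂ : IsResidueVector 4 2 v₂ := isResidueVector_four (by norm_num)
  have h₃ : IsResidueVector 4 2 v₃ := isResidueVector_four (by norm_num)
  have h₄ : IsResidueVector 4 2 v₄ := isResidueVector_four (by norm_num)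
  have h₅ : IsResidueVector 4 2 v₅ := isResidueVector_four (by norm_num)
  have h₆ : IsResidueVector 4 2 v₆ := isResidueVector_four (by norm_num)
  have e₃₀₁ : r v₃ {0, 1} = 1/4 :=
    (hr.pair_eq_of_eq_zero h₃ (m := 2) (l := 3) (by decide) rfl).trans
      (by norm_num [hv₃, Matrix.cons_val_two, Matrix.cons_val_three])
  have e₆₀₁ : r v₆ {0, 1} = 1/2 :=
    (hr.pair_eq_of_eq_zero h₆ (m := 2) (l := 3) (by decide) rfl).trans
      (by norm_num [hv₆, Matrix.cons_val_two, Matrix.cons_val_three])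
  have e₆₀₂ : r v₆ {0, 2} = 1/4 :=
    (hr.pair_eq_of_eq_zero h₆ (m := 1) (l := 3) (by decide) rfl).trans
      (by norm_num [hv₆, Matrix.cons_val_two, Matrix.cons_val_three])
  have e₄₀₃ : r v₄ {0, 3} = 1/4 :=
    (hr.pair_eq_of_eq_zero h₄ (m := 1) (l := 2) (by decide) rfl).trans
      (by norm_num [hv₄, Matrix.cons_val_two, Matrix.cons_val_three])
  have s₁ : r v₁ {0, 1} + r v₁ {0, 2} + r v₁ {0, 3} = 3/4 :=
    (hr.pair_add_pair_add_pair_eq h₁ (by decide)).trans (by simp [hv₁])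
  have s₂ : r v₂ {0, 1} + r v₂ {0, 2} + r v₂ {0, 3} = 3/4 :=
    (hr.pair_add_pair_add_pair_eq h₂ (by decide)).trans (by simp [hv₂])
  have s₅ : r v₅ {0, 1} + r v₅ {0, 2} + r v₅ {0, 3} = 3/4 :=
    (hr.pair_add_pair_add_pair_eq h₅ (by decide)).trans (by simp [hv₅])
  have l₁ : r v₁ {0, 1} = r v₃ {0, 1} := hloc _ _ h₁ h₃ _ rfl (by simp [hv₁, hv₃])
  have l₂ : r v₁ {0, 3} = r v₄ {0, 3} := hloc _ _ h₁ h₄ _ rfl (by simp [hv₁, hv₄])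
  have l₃ : r v₂ {0, 1} = r v₃ {0, 1} := hloc _ _ h₂ h₃ _ rfl (by simp [hv₂, hv₃])
  have l₄ : r v₂ {0, 2} = r v₆ {0, 2} := hloc _ _ h₂ h₆ _ rfl (by simp [hv₂, hv₆])
  have l₅ : r v₅ {0, 1} = r v₆ {0, 1} := hloc _ _ h₅ h₆ _ rfl (by simp [hv₅, hv₆])
  have l₆ : r v₅ {0, 2} = r v₁ {0, 2} := hloc _ _ h₅ h₁ _ rfl (by simp [hv₅, hv₁])
  have l₇ : r v₅ {0, 3} = r v₂ {0, 3} := hloc _ _ h₅ h₂ _ rfl (by simp [hv₅, hv₂])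
  linarith

end IsRoundingRule

/-- No rounding rule for 4 parties satisfies the strengthened monotonicity
axiom in which only the residues inside `T` are required to increase. -/
theorem no_strengthened_selection_monotone
    (r : (Fin 4 → ℝ) → Finset (Fin 4) → ℝ) (hr : IsRoundingRule 4 r) :
    ¬ (∀ (k : ℕ) (p p' : Fin 4 → ℝ),
        (∀ i, 0 ≤ p i ∧ p i < 1) → (∀ i, 0 ≤ p' i ∧ p' i < 1) →
        (∑ i, p i = (k : ℝ)) → (∑ i, p' i = (k : ℝ)) →
        ∀ T : Finset (Fin 4), T.card = k →
          (∀ i ∈ T, p i ≤ p' i) → r p T ≤ r p' T) :=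
  fun hmono => hr.not_isLocalAt_two (isLocalAt_of_monotone (hmono 2))
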